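/- Let E be a barrelled locally convex Hausdorff topological vector space over ℂ in which every bounded subset is relatively compact (i.e. E is a Montel space), and let T : E → E be a continuous linear operator. Then the following are equivalent: (i) T is Cesàro bounded and lim_{n→∞} (1/n)·Tⁿx = 0 for every x ∈ E; (ii) T is mean ergodic; (iii) T is uniformly mean ergodic. -/

import Mathlib

open Filter Topology

/-- The `n`-th Cesàro mean of `T` applied to `x`: `(1/n) ∑_{m=1}^{n} Tᵐ x`. -/
noncomputable def cesaroMean {E : Type*} [AddCommGroup E] [Module ℂ E] [TopologicalSpace E]
    (T : E →L[ℂ] E) (n : ℕ) (x : E) : E :=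
  (n : ℂ)⁻¹ • ∑ m ∈ Finset.Icc 1 n, (T ^ m) x

/-!
On a Montel space the Cesàro means of a Cesàro bounded operator have relatively compact orbits.
Any cluster point `y` of `(T^[n] x)` is fixed by `T`, because `T T^[n] x - T^[n] x = (Tⁿ⁺¹x - Tx)/n`
tends to `0`, and `x - y` lies in the closure of the range of `I - T`, on which the means tend to
`0` by equicontinuity. Hence `T^[n] x → y`, and the limit is a continuous linear map, again by
equicontinuity. Conversely, barrelledness turns pointwise convergence into equicontinuity, and
equicontinuous families converge uniformly on compact sets, hence on bounded ones.
-/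

section General

open Uniformity

theorem Equicontinuous.isVonNBounded_range_apply {ι 𝕜 E F : Type*} [NormedField 𝕜]
    [AddCommGroup E] [Module 𝕜 E] [TopologicalSpace E] [ContinuousSMul 𝕜 E]
    [AddCommGroup F] [Module 𝕜 F] [UniformSpace F] [IsUniformAddGroup F]
    {f : ι → E →L[𝕜] F} (hf : Equicontinuous fun i => ⇑(f i)) (x : E) :
    Bornology.IsVonNBounded 𝕜 (Set.range fun i => f i x) := by
  intro V hV
  have hU : {z : E | ∀ i, f i z ∈ V} ∈ 𝓝 0 := by
    have hVu : {p : F × F | p.2 - p.1 ∈ V} ∈ 𝓤 F := by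
      rw [uniformity_eq_comap_nhds_zero F]
      exact preimage_mem_comap hV
    filter_upwards [hf 0 _ hVu] with z hz i
    simpa using hz i
  filter_upwards [Bornology.isVonNBounded_singleton x hU] with c hc
  rintro - ⟨i, rfl⟩
  obtain ⟨z, hz, rfl⟩ := hc rfl
  simpa only [map_smul] using Set.smul_mem_smul_set (hz i)

theorem EquicontinuousOn.tendstoUniformlyOn_of_tendsto {ι X α : Type*} [TopologicalSpace X]
    [UniformSpace α] {F : ι → X → α} {f : X → α} {l : Filter ι} {K : Set X}
    (hF : EquicontinuousOn F K) (hK : IsCompact K) (h : ∀ x ∈ K, Tendsto (F · x) l (𝓝 (f x))) :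
    TendstoUniformlyOn F f l K := by
  have := (EquicontinuousOn.tendsto_uniformOnFun_iff_pi' (𝔖 := {K}) (by simpa using hK)
    (by simpa using hF) l f).2 (by simpa [tendsto_pi_nhds] using h)
  rw [UniformOnFun.tendsto_iff_tendstoUniformlyOn] at this
  exact this K rfl

theorem exists_continuousLinearMap_tendsto_of_equicontinuous {ι 𝕜 E F : Type*} [NormedField 𝕜]
    [AddCommGroup E] [Module 𝕜 E] [TopologicalSpace E]
    [AddCommGroup F] [Module 𝕜 F] [UniformSpace F] [ContinuousAdd F] [ContinuousConstSMul 𝕜 F]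
    [T2Space F] {l : Filter ι} [l.NeBot] {f : ι → E →L[𝕜] F}
    (hf : Equicontinuous fun i => ⇑(f i)) (h : ∀ x, ∃ y, Tendsto (fun i => f i x) l (𝓝 y)) :
    ∃ P : E →L[𝕜] F, ∀ x, Tendsto (fun i => f i x) l (𝓝 (P x)) := by
  choose g hg using h
  have hlim : Tendsto (fun i x => f i x) l (𝓝 g) := tendsto_pi_nhds.2 hg
  exact ⟨⟨linearMapOfTendsto g (fun i => (f i : E →ₗ[𝕜] F)) hlim,
    hlim.continuous_of_equicontinuous hf⟩, hg⟩

end General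

section Algebra

open Finset

variable {E : Type*} [AddCommGroup E] [Module ℂ E] [TopologicalSpace E] (T : E →L[ℂ] E)

theorem cesaroMean_of_apply_eq {n : ℕ} (hn : n ≠ 0) {y : E} (hy : T y = y) :
    cesaroMean T n y = y := by
  have hpow (m : ℕ) : (T ^ m) y = y := by
    rw [FunLike.coe_pow_eq_iterate]
    exact Function.iterate_fixed hy m
  simp [cesaroMean, hpow, ← Nat.cast_smul_eq_nsmul ℂ, smul_smul, hn]

variable [IsTopologicalAddGroup E] [ContinuousConstSMul ℂ E]

noncomputable def cesaroCLM (n : ℕ) : E →L[ℂ] E :=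
  (n : ℂ)⁻¹ • ∑ m ∈ Icc 1 n, T ^ m

@[simp]
theorem coe_cesaroCLM (n : ℕ) : ⇑(cesaroCLM T n) = cesaroMean T n := by
  ext x
  simp [cesaroCLM, cesaroMean]

theorem cesaroCLM_eq_smul_sum_range (n : ℕ) :
    cesaroCLM T n = (n : ℂ)⁻¹ • ∑ k ∈ range n, T ^ (k + 1) := by
  rw [cesaroCLM, range_eq_Ico, sum_Ico_add', zero_add, Finset.Ico_add_one_right_eq_Icc]

theorem natCast_smul_cesaroCLM (n : ℕ) :
    (n : ℂ) • cesaroCLM T n = ∑ k ∈ range n, T ^ (k + 1) := by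
  rcases eq_or_ne n 0 with rfl | hn
  · simp
  · rw [cesaroCLM_eq_smul_sum_range, smul_smul, mul_inv_cancel₀ (Nat.cast_ne_zero.2 hn), one_smul]

theorem commute_cesaroCLM (n : ℕ) : Commute T (cesaroCLM T n) :=
  (Commute.sum_right _ _ _ fun m _ => Commute.self_pow T m).smul_right _

theorem one_sub_mul_cesaroCLM (n : ℕ) :
    (1 - T) * cesaroCLM T n = (n : ℂ)⁻¹ • (T - T ^ (n + 1)) := by
  have hsum : ∑ k ∈ range n, T ^ (k + 1) = T * ∑ k ∈ range n, T ^ k := by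
    simp only [mul_sum, pow_succ']
  rw [cesaroCLM_eq_smul_sum_range, mul_smul_comm, hsum, ← mul_assoc,
    ((Commute.one_left T).sub_left (Commute.refl T)).eq, mul_assoc, mul_neg_geom_sum, mul_sub,
    mul_one, pow_succ']

theorem one_sub_cesaroCLM {n : ℕ} (hn : n ≠ 0) :
    1 - cesaroCLM T n = (1 - T) * ((n : ℂ)⁻¹ • ∑ k ∈ range n, ∑ j ∈ range (k + 1), T ^ j) := by
  rw [mul_smul_comm, mul_sum]
  simp only [mul_neg_geom_sum]
  rw [sum_sub_distrib, sum_const, card_range, smul_sub, ← Nat.cast_smul_eq_nsmul ℂ, smul_smul,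
    inv_mul_cancel₀ (Nat.cast_ne_zero.2 hn), one_smul, cesaroCLM_eq_smul_sum_range]

theorem cesaroCLM_succ_sub (n : ℕ) :
    cesaroCLM T (n + 1) - ((n : ℂ) / (n + 1)) • cesaroCLM T n
      = ((n + 1 : ℕ) : ℂ)⁻¹ • T ^ (n + 1) := by
  have hsucc : ((n + 1 : ℕ) : ℂ) • cesaroCLM T (n + 1) = (n : ℂ) • cesaroCLM T n + T ^ (n + 1) := by
    rw [natCast_smul_cesaroCLM, natCast_smul_cesaroCLM, sum_range_succ]
  rw [← eq_inv_smul_iff₀ (Nat.cast_ne_zero.2 n.succ_ne_zero)] at hsucc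
  rw [hsucc]
  push_cast
  module

theorem apply_cesaroMean (n : ℕ) (x : E) : T (cesaroMean T n x) = cesaroMean T n (T x) := by
  simpa only [mul_apply_eq_comp, coe_cesaroCLM] using congr($((commute_cesaroCLM T n).eq) x)

theorem cesaroMean_sub_apply (n : ℕ) (x : E) :
    cesaroMean T n (x - T x) = (n : ℂ)⁻¹ • (T x - (T ^ n) (T x)) := by
  have h := congr($(((Commute.one_left _).sub_left (commute_cesaroCLM T n)).eq.symm.trans
    (one_sub_mul_cesaroCLM T n)) x)
  simpa [pow_succ] using h

theorem sub_cesaroMean_mem_range {n : ℕ} (hn : n ≠ 0) (x : E) :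
    x - cesaroMean T n x ∈ Set.range fun w => w - T w :=
  ⟨_, by simpa only [mul_apply_eq_comp, sub_apply, one_apply_eq_self, coe_cesaroCLM] using
    congr($(one_sub_cesaroCLM T hn) x).symm⟩

end Algebra

section Limits

open Set

variable {E : Type*} [AddCommGroup E] [Module ℂ E] [UniformSpace E] [IsUniformAddGroup E]
  [ContinuousSMul ℂ E] {T : E →L[ℂ] E}

theorem tendsto_inv_smul_pow_of_tendsto_cesaroMean {x p : E}
    (hx : Tendsto (fun n : ℕ => cesaroMean T (n + 1) x) atTop (𝓝 p)) :
    Tendsto (fun n : ℕ => (n : ℂ)⁻¹ • (T ^ n) x) atTop (𝓝 0) := by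
  rw [← tendsto_add_atTop_iff_nat 1]
  have h := hx.sub ((tendsto_natCast_div_add_atTop (1 : ℂ)).smul
    ((tendsto_add_atTop_iff_nat (f := fun n => cesaroMean T n x) 1).1 hx))
  rw [one_smul, sub_self] at h
  refine h.congr fun n => ?_
  simpa only [sub_apply, smul_apply, coe_cesaroCLM]
    using congr($(cesaroCLM_succ_sub T n) x)

theorem tendsto_cesaroMean_sub_apply
    (hT : ∀ x : E, Tendsto (fun n : ℕ => (n : ℂ)⁻¹ • (T ^ n) x) atTop (𝓝 0)) (x : E) :
    Tendsto (fun n : ℕ => cesaroMean T (n + 1) (x - T x)) atTop (𝓝 0) := by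
  simp only [cesaroMean_sub_apply]
  have h1 := ((tendsto_inv_atTop_nhds_zero_nat (𝕜 := ℂ)).comp
    (tendsto_add_atTop_nat 1)).smul_const (T x)
  have h2 := (hT (T x)).comp (tendsto_add_atTop_nat 1)
  simpa only [Function.comp_def, smul_sub, zero_smul, sub_zero] using h1.sub h2

theorem tendsto_cesaroMean_zero_of_mem_closure_range
    (hec : Equicontinuous fun n : ℕ => cesaroMean T (n + 1))
    (hT : ∀ x : E, Tendsto (fun n : ℕ => (n : ℂ)⁻¹ • (T ^ n) x) atTop (𝓝 0))
    {z : E} (hz : z ∈ closure (range fun w => w - T w)) :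
    Tendsto (fun n : ℕ => cesaroMean T (n + 1) z) atTop (𝓝 0) :=
  closure_minimal (by rintro _ ⟨w, rfl⟩; exact tendsto_cesaroMean_sub_apply hT w)
    (hec.isClosed_setOfPred_tendsto continuous_const) hz

theorem apply_eq_self_of_tendsto_cesaroMean [T2Space E]
    (hT : ∀ x : E, Tendsto (fun n : ℕ => (n : ℂ)⁻¹ • (T ^ n) x) atTop (𝓝 0))
    {l : Filter ℕ} [l.NeBot] (hl : l ≤ atTop) {x y : E}
    (hy : Tendsto (fun n : ℕ => cesaroMean T (n + 1) x) l (𝓝 y)) : T y = y := by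
  have hsub :
      Tendsto (fun n : ℕ => T (cesaroMean T (n + 1) x) - cesaroMean T (n + 1) x) l (𝓝 0) := by
    have h := (tendsto_cesaroMean_sub_apply hT x).neg.mono_left hl
    rw [neg_zero] at h
    refine h.congr fun n => ?_
    rw [apply_cesaroMean, ← coe_cesaroCLM, map_sub, neg_sub]
  refine tendsto_nhds_unique ((T.continuous.tendsto y).comp hy) ?_
  simpa [Function.comp_def] using hsub.add hy

theorem sub_mem_closure_range_of_tendsto_cesaroMean {l : Filter ℕ} [l.NeBot] {x y : E}
    (hy : Tendsto (fun n : ℕ => cesaroMean T (n + 1) x) l (𝓝 y)) :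
    x - y ∈ closure (range fun w => w - T w) :=
  mem_closure_of_tendsto (tendsto_const_nhds.sub hy)
    (Eventually.of_forall fun n => sub_cesaroMean_mem_range T n.succ_ne_zero x)

theorem exists_tendsto_cesaroMean [T2Space E]
    (hec : Equicontinuous fun n : ℕ => cesaroMean T (n + 1))
    (hT : ∀ x : E, Tendsto (fun n : ℕ => (n : ℂ)⁻¹ • (T ^ n) x) atTop (𝓝 0)) {x : E}
    (hK : IsCompact (closure (range fun n : ℕ => cesaroMean T (n + 1) x))) :
    ∃ y, Tendsto (fun n : ℕ => cesaroMean T (n + 1) x) atTop (𝓝 y) := by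
  obtain ⟨y, -, hy⟩ := hK.exists_mapClusterPt (f := atTop)
    (tendsto_principal.2 (Eventually.of_forall fun n => subset_closure (mem_range_self n)))
  obtain ⟨U, hU, hUy⟩ := mapClusterPt_iff_ultrafilter.1 hy
  have hTy := apply_eq_self_of_tendsto_cesaroMean hT hU hUy
  have h := (tendsto_cesaroMean_zero_of_mem_closure_range hec hT
    (sub_mem_closure_range_of_tendsto_cesaroMean hUy)).add_const y
  rw [zero_add] at h
  refine ⟨y, h.congr fun n => ?_⟩
  rw [← coe_cesaroCLM, map_sub, coe_cesaroCLM, cesaroMean_of_apply_eq T n.succ_ne_zero hTy,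
    sub_add_cancel]

end Limits

theorem stmt5_general {E : Type*} [AddCommGroup E] [Module ℂ E]
    [UniformSpace E] [IsUniformAddGroup E] [ContinuousSMul ℂ E]
    [T2Space E]
    -- `E` is barrelled: every pointwise bounded family of continuous linear operators on `E`
    -- is equicontinuous (Banach–Steinhaus property)
    (hbarrelled : ∀ (ι : Type) (f : ι → E →L[ℂ] E),
      (∀ x : E, Bornology.IsVonNBounded ℂ (Set.range fun i => f i x)) →
        Equicontinuous fun i => ⇑(f i))
    -- every bounded subset of `E` is relatively compact
    (hmontel : ∀ s : Set E, Bornology.IsVonNBounded ℂ s → IsCompact (closure s))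
    (T : E →L[ℂ] E) :
    List.TFAE
      [ -- (i) `T` is Cesàro bounded and `(1/n) Tⁿ x → 0` for every `x ∈ E`
        (Equicontinuous fun n : ℕ => cesaroMean T (n + 1)) ∧
          ∀ x : E, Tendsto (fun n : ℕ => (n : ℂ)⁻¹ • (T ^ n) x) atTop (𝓝 (0 : E)),
        -- (ii) `T` is mean ergodic
        ∃ P : E →L[ℂ] E, ∀ x : E,
          Tendsto (fun n : ℕ => cesaroMean T (n + 1) x) atTop (𝓝 (P x)),
        -- (iii) `T` is uniformly mean ergodic
        ∃ P : E →L[ℂ] E, ∀ s : Set E, Bornology.IsVonNBounded ℂ s →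
          TendstoUniformlyOn (fun n : ℕ => cesaroMean T (n + 1)) (⇑P) atTop s ] := by
  have hequicont (P : E →L[ℂ] E)
      (hP : ∀ x, Tendsto (fun n : ℕ => cesaroMean T (n + 1) x) atTop (𝓝 (P x))) :
      Equicontinuous fun n : ℕ => cesaroMean T (n + 1) := by
    simpa using hbarrelled ℕ (fun n => cesaroCLM T (n + 1))
      fun x => by simpa using (hP x).isVonNBounded_range ℂ
  tfae_have 1 → 2 := by
    rintro ⟨hec, hT⟩
    have hec' : Equicontinuous fun n : ℕ => ⇑(cesaroCLM T (n + 1)) := by simpa using hec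
    have hlim (x : E) : ∃ y, Tendsto (fun n : ℕ => cesaroCLM T (n + 1) x) atTop (𝓝 y) := by
      simpa using exists_tendsto_cesaroMean hec hT
        (hmontel _ (by simpa using hec'.isVonNBounded_range_apply x))
    simpa using exists_continuousLinearMap_tendsto_of_equicontinuous hec' hlim
  tfae_have 2 → 3 := fun ⟨P, hP⟩ => ⟨P, fun s hs =>
    (((hequicont P hP).equicontinuousOn _).tendstoUniformlyOn_of_tendsto (hmontel s hs)
      fun x _ => hP x).mono subset_closure⟩
  tfae_have 3 → 2 := fun ⟨P, hP⟩ =>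
    ⟨P, fun x => (hP {x} (Bornology.isVonNBounded_singleton x)).tendsto_at rfl⟩
  tfae_have 2 → 1 := fun ⟨P, hP⟩ =>
    ⟨hequicont P hP, fun _ => tendsto_inv_smul_pow_of_tendsto_cesaroMean (hP _)⟩
  tfae_finish

/-- On a Montel space, for an operator `T` the following are equivalent: (i) `T` is Cesàro
bounded and `(1/n) Tⁿ x → 0` for every `x`; (ii) `T` is mean ergodic; (iii) `T` is uniformly
mean ergodic. -/
theorem stmt5 {E : Type*} [AddCommGroup E] [Module ℂ E] [Module ℝ E] [IsScalarTower ℝ ℂ E]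
    [UniformSpace E] [IsUniformAddGroup E] [ContinuousSMul ℂ E]
    [LocallyConvexSpace ℝ E] [T2Space E]
    -- `E` is barrelled: every pointwise bounded family of continuous linear operators on `E`
    -- is equicontinuous (Banach–Steinhaus property)
    (hbarrelled : ∀ (ι : Type) (f : ι → E →L[ℂ] E),
      (∀ x : E, Bornology.IsVonNBounded ℂ (Set.range fun i => f i x)) →
        Equicontinuous fun i => ⇑(f i))
    -- every bounded subset of `E` is relatively compact
    (hmontel : ∀ s : Set E, Bornology.IsVonNBounded ℂ s → IsCompact (closure s))
    (T : E →L[ℂ] E) :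
    List.TFAE
      [ -- (i) `T` is Cesàro bounded and `(1/n) Tⁿ x → 0` for every `x ∈ E`
        (Equicontinuous fun n : ℕ => cesaroMean T (n + 1)) ∧
          ∀ x : E, Tendsto (fun n : ℕ => (n : ℂ)⁻¹ • (T ^ n) x) atTop (𝓝 (0 : E)),
        -- (ii) `T` is mean ergodic
        ∃ P : E →L[ℂ] E, ∀ x : E,
          Tendsto (fun n : ℕ => cesaroMean T (n + 1) x) atTop (𝓝 (P x)),
        -- (iii) `T` is uniformly mean ergodic
        ∃ P : E →L[ℂ] E, ∀ s : Set E, Bornology.IsVonNBounded ℂ s →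
          TendstoUniformlyOn (fun n : ℕ => cesaroMean T (n + 1)) (⇑P) atTop s ] :=
  stmt5_general hbarrelled hmontel T
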